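/- Under the stated boundedness assumptions: ‖d^k‖ → 0 and r(x^k) → 0 as k → ∞, where r(x) := ‖x − prox_g(x − ∇f(x))‖ for x ∈ cl(dom g); the set ω(x⁰) of accumulation points of {x^k} is nonempty and compact; every point of ω(x⁰) is a stationary point of F; and F is constant on ω(x⁰), equal to the limit F̄ := lim_{k→∞} F(x^k). -/

import Mathlib

/-!
The line search gives the sufficient decrease `F(x^{k+1}) + σ α_k ‖d^k‖² ≤ F(x^k)`, so
`F(x^k)` converges and `α_k ‖d^k‖² → 0`. By the descent lemma the Armijo test accepts
every `α ≤ (μ - 2σ) / L_f`, so `α_k` stays bounded below and `d^k → 0`. Strong convexity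
of the model `Θ_k` turns the inexactness criterion into `μ/2 ‖y^k - x̄^k‖² ≤ (sup ε_k) ‖d^k‖²`,
hence `x̄^k - x^k → 0`, and monotonicity of `∂g` bounds the prox residual by
`(2 + μ̄) ‖x̄^k - x^k‖`. The optimality condition `-(∇f(x^k) + 𝒢_k (x̄^k - x^k)) ∈ ∂g(x̄^k)`
passes to the limit along a convergent subsequence because `∂g` has closed graph when `g` is
lower semicontinuous, and continuity of `f` and of `g` on `dom g` identifies `F` with `F̄` on
the cluster set.
-/

open Set Filter
open scoped RealInnerProductSpace ENNReal

noncomputable section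

attribute [local instance] Classical.propDecidable

variable {X : Type*} [NormedAddCommGroup X] [InnerProductSpace ℝ X] [FiniteDimensional ℝ X]

/-- `g` extended by `+∞` outside its domain `s`. -/
def extE (g : X → ℝ) (s : Set X) (x : X) : EReal := if x ∈ s then (g x : EReal) else ⊤

/-- The objective `F = f + g`, extended-real valued. -/
def FE (f g : X → ℝ) (s : Set X) (x : X) : EReal := (f x : EReal) + extE g s x

/-- The strongly convex model `Θ_k` with base point `xk` and metric `G`, evaluated at `z`. -/
def Theta (f g : X → ℝ) (fgrad : X → X) (G : X →L[ℝ] X) (xk z : X) : ℝ :=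
  f xk + ⟪fgrad xk, z - xk⟫ + (1/2) * ⟪z - xk, G (z - xk)⟫ + g z

/-- `p` is the proximal point `prox^D_{γ g}(u)`, i.e. the minimizer over `dom g` of
`z ↦ (1/(2γ)) ⟪ z - u, D (z - u) ⟫ + g z`. -/
def IsProxPt (γ : ℝ) (D : X →L[ℝ] X) (g : X → ℝ) (s : Set X) (u p : X) : Prop :=
  p ∈ s ∧ ∀ z ∈ s,
    (1 / (2 * γ)) * ⟪p - u, D (p - u)⟫ + g p ≤
      (1 / (2 * γ)) * ⟪z - u, D (z - u)⟫ + g z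

/-- The convex subdifferential of (the extension by `+∞` of) `g` at `x`. -/
def SubdiffAt (g : X → ℝ) (s : Set X) (x : X) : Set X :=
  {v : X | x ∈ s ∧ ∀ z ∈ s, g x + ⟪v, z - x⟫ ≤ g z}

/-- `x` is a stationary point of `F = f + g`, i.e. `0 ∈ ∇f(x) + ∂g(x)`. -/
def IsStationaryPtFG (fgrad : X → X) (g : X → ℝ) (s : Set X) (x : X) : Prop :=
  -fgrad x ∈ SubdiffAt g s x

open Topology
open scoped NNReal

theorem LowerSemicontinuous.le_of_tendsto {α β ι : Type*} [TopologicalSpace α]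
    [TopologicalSpace β] [LinearOrder β] [DenselyOrdered β] [OrderTopology β] {u : α → β}
    (hu : LowerSemicontinuous u) {l : Filter ι} [l.NeBot] {p : ι → α} {h : ι → β} {a : α} {c : β}
    (hp : Tendsto p l (𝓝 a)) (hh : Tendsto h l (𝓝 c)) (hle : ∀ᶠ i in l, u (p i) ≤ h i) :
    u a ≤ c := by
  by_contra! hlt
  obtain ⟨c', hc, hc'⟩ := exists_between hlt
  obtain ⟨i, hup, hhc, hle⟩ :=
    ((hp.eventually (hu a c' hc')).and ((hh.eventually (gt_mem_nhds hc)).and hle)).exists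
  exact (hup.trans_le hle).not_gt hhc

theorem IsCompact.isCompact_setOf_mapClusterPt {α ι : Type*} [TopologicalSpace α] [T2Space α]
    {K : Set α} {l : Filter ι} {u : ι → α} (hK : IsCompact K) (hu : ∀ᶠ i in l, u i ∈ K) :
    IsCompact {p | MapClusterPt p l u} :=
  hK.of_isClosed_subset isClosed_setOfPred_clusterPt fun _ hp =>
    hK.isClosed.closure_subset
      (mem_closure_iff_clusterPt.2 (ClusterPt.mono hp (tendsto_principal.2 hu)))

theorem exists_tendsto_of_succ_add_le {u e : ℕ → ℝ} (he : ∀ k, 0 ≤ e k)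
    (hu : ∀ k, u (k + 1) + e k ≤ u k) (hbdd : BddBelow (range u)) :
    ∃ l, Tendsto u atTop (𝓝 l) ∧ Tendsto e atTop (𝓝 0) := by
  have hlim := tendsto_atTop_ciInf (antitone_nat_of_succ_le fun k => by linarith [hu k, he k]) hbdd
  refine ⟨_, hlim, squeeze_zero (g := fun k => u k - u (k + 1)) he (fun k => by linarith [hu k]) ?_⟩
  simpa using hlim.sub (hlim.comp (tendsto_add_atTop_nat 1))

theorem min_le_pow_of_forall_lt_not {β c L : ℝ} {P : ℕ → Prop} (hβ : 0 ≤ β) (hL : 0 < L)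
    (hP : ∀ j, β ^ j * L ≤ c → P j) {m : ℕ} (hm : ∀ j < m, ¬ P j) :
    min 1 (β * c / L) ≤ β ^ m := by
  cases m with
  | zero => simp
  | succ n =>
    have hc : c < β ^ n * L := not_le.1 fun h => hm n n.lt_succ_self (hP n h)
    calc min 1 (β * c / L) ≤ β * c / L := min_le_right _ _
      _ ≤ β * (β ^ n * L) / L := by gcongr
      _ = β ^ (n + 1) := by field_simp; ring

section Seminormed

variable {E : Type*} [SeminormedAddCommGroup E]

theorem tendsto_norm_zero_of_mul_sq {d : ℕ → E} {a : ℕ → ℝ} {δ : ℝ} (hδ : 0 < δ) (ha : ∀ k, δ ≤ a k)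
    (h : Tendsto (fun k => a k * ‖d k‖ ^ 2) atTop (𝓝 0)) :
    Tendsto (fun k => ‖d k‖) atTop (𝓝 0) := by
  have hsq : Tendsto (fun k => ‖d k‖ ^ 2) atTop (𝓝 0) :=
    squeeze_zero (fun _ => by positivity)
      (fun k => (le_div_iff₀' hδ).2 (mul_le_mul_of_nonneg_right (ha k) (sq_nonneg _)))
      (by simpa using h.div_const δ)
  simpa using hsq.sqrt

theorem tendsto_norm_sub_of_mul_sq_le {x y b : ℕ → E} {c K : ℝ} (hc : 0 < c)
    (h : ∀ k, c * ‖y k - b k‖ ^ 2 ≤ K * ‖y k - x k‖ ^ 2)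
    (hyx : Tendsto (fun k => ‖y k - x k‖) atTop (𝓝 0)) :
    Tendsto (fun k => ‖b k - x k‖) atTop (𝓝 0) := by
  have hyb : Tendsto (fun k => ‖y k - b k‖) atTop (𝓝 0) :=
    tendsto_norm_zero_of_mul_sq hc (fun _ => le_rfl)
      (squeeze_zero (fun _ => by positivity) h (by simpa using (hyx.pow 2).const_mul K))
  refine squeeze_zero (fun _ => norm_nonneg _) (fun k => ?_) (by simpa using hyb.add hyx)
  rw [norm_sub_rev (y k)]
  exact norm_sub_le_norm_sub_add_norm_sub _ _ _

end Seminormed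

section NormedSpace

variable {E : Type*} [NormedAddCommGroup E] [NormedSpace ℝ E]

theorem ConvexOn.le_add_fderiv_of_isMinOn {s : Set E} {φ g : E → ℝ} {φ' : E →L[ℝ] ℝ} {p z : E}
    (hg : ConvexOn ℝ s g) (hmin : IsMinOn (fun w => φ w + g w) s p) (hφ : HasFDerivAt φ φ' p)
    (hp : p ∈ s) (hz : z ∈ s) : g p ≤ g z + φ' (z - p) := by
  -- Along the segment, `g` lies below its chord, so `φ + chord` is still minimal at `p`.
  set ψ : ℝ → ℝ := fun t => φ (p + t • (z - p)) + t * (g z - g p)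
  have hψmin : IsLocalMinOn ψ (Icc 0 1) 0 := by
    refine IsMinOn.localize fun t ht => ?_
    have hchord : g (p + t • (z - p)) ≤ g p + t * (g z - g p) := by
      have hconv := hg.2 hp hz (sub_nonneg.2 ht.2) ht.1 (sub_add_cancel 1 t)
      rw [smul_eq_mul, smul_eq_mul] at hconv
      rw [show p + t • (z - p) = (1 - t) • p + t • z by module]
      linarith
    have hle : φ p + g p ≤ φ (p + t • (z - p)) + g (p + t • (z - p)) :=
      hmin (hg.1.add_smul_sub_mem hp hz ht)
    show ψ 0 ≤ ψ t
    simp only [ψ, zero_smul, add_zero, zero_mul]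
    linarith
  have hline : HasDerivAt (fun t : ℝ => p + t • (z - p)) (z - p) 0 := by
    simpa using ((hasDerivAt_id (0 : ℝ)).smul_const (z - p)).const_add p
  have hψ : HasDerivAt ψ (φ' (z - p) + 1 * (g z - g p)) 0 := by
    have hφ0 : HasFDerivAt φ φ' (p + (0 : ℝ) • (z - p)) := by simpa using hφ
    exact (hφ0.comp_hasDerivAt 0 hline).add ((hasDerivAt_id' 0).mul_const _)
  have hnonneg := hψmin.hasFDerivWithinAt_nonneg hψ.hasDerivWithinAt.hasFDerivWithinAt
    (y := 1) (mem_posTangentConeAt_of_segment_subset (by simp [segment_eq_Icc]))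
  simp only [ContinuousLinearMap.toSpanSingleton_apply, smul_eq_mul, one_mul] at hnonneg
  linarith

end NormedSpace

theorem FE_eq_coe_of_mem {α : Type*} {f g : α → ℝ} {s : Set α} {z : α} (hz : z ∈ s) :
    FE f g s z = ((f z + g z : ℝ) : EReal) := by
  rw [FE, extE, if_pos hz, EReal.coe_add]

theorem mem_of_FE_le_coe {α : Type*} {f g : α → ℝ} {s : Set α} {z : α} {r : ℝ}
    (h : FE f g s z ≤ (r : EReal)) : z ∈ s := by
  by_contra hz
  rw [FE, extE, if_neg hz, EReal.coe_add_top, top_le_iff] at h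
  exact EReal.coe_ne_top _ h

theorem mem_and_add_le_of_FE_le {α : Type*} {f g : α → ℝ} {s : Set α} {x' y w : α} {r : ℝ}
    (hw : FE f g s w ≤ (r : EReal))
    (hupd : (FE f g s y < FE f g s w ∧ x' = y) ∨ (¬ FE f g s y < FE f g s w ∧ x' = w)) :
    x' ∈ s ∧ f x' + g x' ≤ r := by
  have hx' : FE f g s x' ≤ (r : EReal) := by
    rcases hupd with ⟨hlt, rfl⟩ | ⟨-, rfl⟩
    exacts [hlt.le.trans hw, hw]
  have hmem := mem_of_FE_le_coe hx'
  rw [FE_eq_coe_of_mem hmem, EReal.coe_le_coe_iff] at hx'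
  exact ⟨hmem, hx'⟩

section InnerProductSpace

variable {E : Type*} [NormedAddCommGroup E] [InnerProductSpace ℝ E]

theorem norm_le_of_sq_le_inner {a b : E} (h : ‖a‖ ^ 2 ≤ ⟪b, a⟫) : ‖a‖ ≤ ‖b‖ := by
  have := h.trans (real_inner_le_norm b a)
  nlinarith [norm_nonneg a, norm_nonneg b]

theorem Convex.le_add_inner_add_of_lipschitzOnWith [CompleteSpace E] {f : E → ℝ}
    {f' : E → E} {Γ : Set E} {L : ℝ≥0} {a b : E} (hΓ : Convex ℝ Γ)
    (hf : ∀ z ∈ Γ, HasGradientAt f (f' z) z) (hL : LipschitzOnWith L f' Γ) (ha : a ∈ Γ)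
    (hb : b ∈ Γ) : f b ≤ f a + ⟪f' a, b - a⟫ + L / 2 * ‖b - a‖ ^ 2 := by
  set c : ℝ → E := fun t => a + t • (b - a)
  have hcΓ : ∀ t ∈ Icc (0 : ℝ) 1, c t ∈ Γ := fun t ht => hΓ.add_smul_sub_mem ha hb ht
  set ψ : ℝ → ℝ := fun t => f (c t) - t * ⟪f' a, b - a⟫ - L / 2 * ‖b - a‖ ^ 2 * t ^ 2
  have hψ : ∀ t ∈ Icc (0 : ℝ) 1,
      HasDerivAt ψ (⟪f' (c t), b - a⟫ - ⟪f' a, b - a⟫ - L / 2 * ‖b - a‖ ^ 2 * (2 * t)) t := by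
    intro t ht
    have hc : HasDerivAt c (b - a) t := by
      have := ((hasDerivAt_id t).smul_const (b - a)).const_add a
      rwa [one_smul] at this
    have hfc := (hasGradientAt_iff_hasFDerivAt.1 (hf _ (hcΓ t ht))).comp_hasDerivAt t hc
    have hsq : HasDerivAt (fun t : ℝ => t ^ 2) (2 * t) t := by simpa using hasDerivAt_pow 2 t
    exact (hfc.sub (hasDerivAt_mul_const _)).sub (hsq.const_mul _)
  have hanti : AntitoneOn ψ (Icc 0 1) := by
    refine antitoneOn_of_deriv_nonpos (convex_Icc 0 1)
      (fun t ht => (hψ t ht).continuousAt.continuousWithinAt)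
      (fun t ht => (hψ t (interior_subset ht)).differentiableAt.differentiableWithinAt)
      (fun t ht => ?_)
    rw [interior_Icc] at ht
    have ht' := Ioo_subset_Icc_self ht
    rw [(hψ t ht').deriv]
    have hlip : ⟪f' (c t) - f' a, b - a⟫ ≤ L * t * ‖b - a‖ ^ 2 :=
      calc ⟪f' (c t) - f' a, b - a⟫ ≤ ‖f' (c t) - f' a‖ * ‖b - a‖ := real_inner_le_norm _ _
        _ ≤ L * ‖c t - a‖ * ‖b - a‖ := by gcongr; exact hL.norm_sub_le (hcΓ t ht') ha
        _ = L * t * ‖b - a‖ ^ 2 := by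
          simp only [c, add_sub_cancel_left, norm_smul, Real.norm_of_nonneg ht.1.le]; ring
    rw [inner_sub_left] at hlip
    linarith
  have := hanti (left_mem_Icc.2 zero_le_one) (right_mem_Icc.2 zero_le_one) zero_le_one
  simp only [ψ, c, zero_smul, one_smul, add_zero, add_sub_cancel] at this
  linarith

theorem inner_sub_nonneg_of_mem_subdiffAt {g : E → ℝ} {s : Set E} {p q v w : E}
    (hv : v ∈ SubdiffAt g s p) (hw : w ∈ SubdiffAt g s q) : 0 ≤ ⟪v - w, p - q⟫ := by
  have hvq := hv.2 q hw.1
  have hwp := hw.2 p hv.1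
  have hflip : ⟪v, q - p⟫ = -⟪v, p - q⟫ := by rw [← inner_neg_right, neg_sub]
  rw [inner_sub_left]
  linarith

theorem mem_subdiffAt_of_tendsto {ι : Type*} {l : Filter ι} [l.NeBot] {g : E → ℝ} {s : Set E}
    {p v : ι → E} {p₀ v₀ : E} (hg : LowerSemicontinuous (extE g s))
    (hp : Tendsto p l (𝓝 p₀)) (hv : Tendsto v l (𝓝 v₀)) (hmem : ∀ i, v i ∈ SubdiffAt g s (p i)) :
    v₀ ∈ SubdiffAt g s p₀ := by
  have hbound : ∀ z ∈ s, extE g s p₀ ≤ ((g z - ⟪v₀, z - p₀⟫ : ℝ) : EReal) := fun z hz =>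
    hg.le_of_tendsto hp
      (EReal.tendsto_coe.2 (tendsto_const_nhds.sub (hv.inner (tendsto_const_nhds.sub hp))))
      (Eventually.of_forall fun i => by
        rw [extE, if_pos (hmem i).1, EReal.coe_le_coe_iff]
        linarith [(hmem i).2 z hz])
  obtain ⟨i⟩ := nonempty_of_neBot l
  have hp₀ : p₀ ∈ s := by
    by_contra hp₀
    have := hbound _ (hmem i).1
    rw [extE, if_neg hp₀, top_le_iff] at this
    exact EReal.coe_ne_top _ this
  refine ⟨hp₀, fun z hz => ?_⟩
  have := hbound z hz
  rw [extE, if_pos hp₀, EReal.coe_le_coe_iff] at this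
  linarith

theorem isStationaryPtFG_of_tendsto {ι : Type*} {l : Filter ι} [l.NeBot] {g : E → ℝ}
    {s : Set E} {fgrad : E → E} {x b : ι → E} {G : ι → E →L[ℝ] E} {M : ℝ} {p : E}
    (hg : LowerSemicontinuous (extE g s)) (hx : Tendsto x l (𝓝 p))
    (hgrad : Tendsto (fun i => fgrad (x i)) l (𝓝 (fgrad p)))
    (hbx : Tendsto (fun i => b i - x i) l (𝓝 0)) (hG : ∀ i, ‖G i‖ ≤ M)
    (hb : ∀ i, -(fgrad (x i) + G i (b i - x i)) ∈ SubdiffAt g s (b i)) :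
    IsStationaryPtFG fgrad g s p := by
  have hGbx : Tendsto (fun i => G i (b i - x i)) l (𝓝 0) := by
    rw [tendsto_zero_iff_norm_tendsto_zero] at hbx ⊢
    refine squeeze_zero (fun _ => norm_nonneg _) (fun i => (G i).le_of_opNorm_le (hG i) _) ?_
    simpa using hbx.const_mul M
  exact mem_subdiffAt_of_tendsto hg (by simpa using hbx.add hx)
    (by simpa using (hgrad.add hGbx).neg) hb

theorem isStationaryPtFG_and_eq_of_mapClusterPt {f g : E → ℝ} {s K : Set E} {fgrad : E → E}
    {x b : ℕ → E} {G : ℕ → E →L[ℝ] E} {M Fbar : ℝ} {p : E} (hK : IsClosed K)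
    (hxK : ∀ k, x k ∈ K) (hxs : ∀ k, x k ∈ s) (hf : ContinuousOn f K)
    (hgrad : ContinuousOn fgrad K) (hgc : ContinuousOn g s) (hg : LowerSemicontinuous (extE g s))
    (hF : Tendsto (fun k => f (x k) + g (x k)) atTop (𝓝 Fbar))
    (hbx : Tendsto (fun k => b k - x k) atTop (𝓝 0)) (hG : ∀ k, ‖G k‖ ≤ M)
    (hb : ∀ k, -(fgrad (x k) + G k (b k - x k)) ∈ SubdiffAt g s (b k))
    (hp : MapClusterPt p atTop x) :
    IsStationaryPtFG fgrad g s p ∧ f p + g p = Fbar := by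
  obtain ⟨ψ, hψ, hxp⟩ := hp.tendsto_subseq
  have hwithin {t : Set E} (ht : ∀ k, x k ∈ t) : Tendsto (x ∘ ψ) atTop (𝓝[t] p) :=
    tendsto_nhdsWithin_iff.2 ⟨hxp, Eventually.of_forall fun j => ht (ψ j)⟩
  have hpK : p ∈ K := hK.mem_of_tendsto hxp (Eventually.of_forall fun j => hxK (ψ j))
  have hstat : IsStationaryPtFG fgrad g s p :=
    isStationaryPtFG_of_tendsto hg hxp ((hgrad p hpK).tendsto.comp (hwithin hxK))
      (hbx.comp hψ.tendsto_atTop) (fun j => hG (ψ j)) (fun j => hb (ψ j))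
  refine ⟨hstat, tendsto_nhds_unique ?_ (hF.comp hψ.tendsto_atTop)⟩
  exact ((hf p hpK).tendsto.comp (hwithin hxK)).add ((hgc p hstat.1).tendsto.comp (hwithin hxs))

theorem neg_add_mem_subdiffAt_of_isMinOn_theta {f g : E → ℝ} {fgrad : E → E} {G : E →L[ℝ] E}
    {s : Set E} {xk p : E} (hg : ConvexOn ℝ s g) (hG : ∀ u v, ⟪G u, v⟫ = ⟪u, G v⟫)
    (hp : p ∈ s) (hmin : IsMinOn (Theta f g fgrad G xk) s p) :
    -(fgrad xk + G (p - xk)) ∈ SubdiffAt g s p := by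
  set φ : E → ℝ := fun w => f xk + ⟪fgrad xk, w - xk⟫ + 1 / 2 * ⟪w - xk, G (w - xk)⟫
  have hφ : HasFDerivAt φ (innerSL ℝ (fgrad xk + G (p - xk))) p := by
    have hsub : HasFDerivAt (fun w : E => w - xk) (ContinuousLinearMap.id ℝ E) p :=
      (hasFDerivAt_id p).sub_const xk
    have := ((hasFDerivAt_const (f xk) p).add ((innerSL ℝ (fgrad xk)).hasFDerivAt.comp p hsub)).add
      ((hsub.inner ℝ (G.hasFDerivAt.comp p hsub)).const_mul (1 / 2))
    refine this.congr_fderiv (ContinuousLinearMap.ext fun w => ?_)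
    have hsymm : ⟪w, G (p - xk)⟫ = ⟪p - xk, G w⟫ := by rw [← hG, real_inner_comm]
    simp only [add_apply, zero_apply, smul_apply, ContinuousLinearMap.comp_apply,
      ContinuousLinearMap.id_apply, ContinuousLinearMap.prod_apply, fderivInnerCLM_apply,
      innerSL_apply_apply, Function.comp_apply, smul_eq_mul, hsymm, inner_add_left, hG]
    ring
  refine ⟨hp, fun z hz => ?_⟩
  have := hg.le_add_fderiv_of_isMinOn (φ := φ) hmin hφ hp hz
  rw [innerSL_apply_apply] at this
  rw [inner_neg_left]
  linarith

theorem sub_mem_subdiffAt_of_isProxPt {g : E → ℝ} {s : Set E} {u p : E} (hg : ConvexOn ℝ s g)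
    (h : IsProxPt 1 (ContinuousLinearMap.id ℝ E) g s u p) : u - p ∈ SubdiffAt g s p := by
  have hmin : IsMinOn (Theta (fun _ => 0) g (fun _ => 0) (ContinuousLinearMap.id ℝ E) u) s p :=
    fun z hz => by simpa [Theta] using h.2 z hz
  simpa using neg_add_mem_subdiffAt_of_isMinOn_theta hg (fun _ _ => rfl) h.1 hmin

theorem half_mul_sq_le_theta_sub {f g : E → ℝ} {fgrad : E → E} {G : E →L[ℝ] E} {s : Set E}
    {xk p y : E} {μ : ℝ} (hg : ConvexOn ℝ s g) (hG : ∀ u v, ⟪G u, v⟫ = ⟪u, G v⟫)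
    (hGμ : ∀ u, μ * ‖u‖ ^ 2 ≤ ⟪u, G u⟫) (hp : p ∈ s)
    (hmin : IsMinOn (Theta f g fgrad G xk) s p) (hy : y ∈ s) :
    μ / 2 * ‖y - p‖ ^ 2 ≤ Theta f g fgrad G xk y - Theta f g fgrad G xk p := by
  have hsub := (neg_add_mem_subdiffAt_of_isMinOn_theta hg hG hp hmin).2 y hy
  have hy' : y - xk = (y - p) + (p - xk) := by abel
  have h1 : ⟪p - xk, G (y - p)⟫ = ⟪G (p - xk), y - p⟫ := (hG _ _).symm
  have h2 : ⟪y - p, G (p - xk)⟫ = ⟪G (p - xk), y - p⟫ := real_inner_comm _ _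
  simp only [Theta, hy', map_add, inner_add_left, inner_add_right, inner_neg_left] at hsub ⊢
  linarith [hGμ (y - p)]

theorem norm_sub_le_of_mem_subdiffAt {g : E → ℝ} {s : Set E} {G : E →L[ℝ] E} {x v p b : E}
    (hp : x - v - p ∈ SubdiffAt g s p) (hb : -(v + G (b - x)) ∈ SubdiffAt g s b) :
    ‖x - p‖ ≤ (2 + ‖G‖) * ‖b - x‖ := by
  have hmono := inner_sub_nonneg_of_mem_subdiffAt hp hb
  have hpb : ‖p - b‖ ≤ ‖(x - b) - G (x - b)‖ := by
    refine norm_le_of_sq_le_inner ?_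
    rw [← real_inner_self_eq_norm_sq]
    have hdiff : x - v - p - -(v + G (b - x)) = ((x - b) - G (x - b)) - (p - b) := by
      rw [show b - x = -(x - b) by abel, map_neg]; abel
    rw [hdiff, inner_sub_left] at hmono
    linarith
  calc ‖x - p‖ ≤ ‖x - b‖ + ‖p - b‖ := by
        rw [norm_sub_rev p]; exact norm_sub_le_norm_sub_add_norm_sub _ _ _
    _ ≤ ‖x - b‖ + (‖x - b‖ + ‖G‖ * ‖x - b‖) := by
        gcongr
        exact hpb.trans ((norm_sub_le _ _).trans (add_le_add le_rfl (G.le_opNorm _)))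
    _ = (2 + ‖G‖) * ‖b - x‖ := by rw [norm_sub_rev]; ring

theorem armijo_of_mul_le_of_theta_lt [CompleteSpace E] {f g : E → ℝ} {fgrad : E → E}
    {G : E →L[ℝ] E} {s Γ : Set E} {L : ℝ≥0} {μ σ α : ℝ} {x y : E} (hg : ConvexOn ℝ s g)
    (hΓ : Convex ℝ Γ) (hf : ∀ z ∈ Γ, HasGradientAt f (fgrad z) z) (hL : LipschitzOnWith L fgrad Γ)
    (hGμ : ∀ u, μ * ‖u‖ ^ 2 ≤ ⟪u, G u⟫) (hxs : x ∈ s) (hys : y ∈ s) (hxΓ : x ∈ Γ) (hyΓ : y ∈ Γ)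
    (hdec : Theta f g fgrad G x y < Theta f g fgrad G x x) (hα : α ∈ Icc (0 : ℝ) 1)
    (hαL : α * L ≤ μ - 2 * σ) :
    f (x + α • (y - x)) + g (x + α • (y - x)) ≤ f x + g x - σ * α * ‖y - x‖ ^ 2 := by
  have hdesc := hΓ.le_add_inner_add_of_lipschitzOnWith hf hL hxΓ (hΓ.add_smul_sub_mem hxΓ hyΓ hα)
  rw [add_sub_cancel_left, real_inner_smul_right, norm_smul, Real.norm_of_nonneg hα.1, mul_pow]
    at hdesc
  have hchord : g (x + α • (y - x)) ≤ (1 - α) * g x + α * g y := by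
    have := hg.2 hxs hys (sub_nonneg.2 hα.2) hα.1 (sub_add_cancel 1 α)
    rw [smul_eq_mul, smul_eq_mul] at this
    rwa [show x + α • (y - x) = (1 - α) • x + α • y by module]
  simp only [Theta, sub_self, inner_zero_right, map_zero, mul_zero, add_zero] at hdec
  -- `F(x + α d) ≤ F(x) - (α/2) ⟪d, G d⟫ + (L/2) α² ‖d‖²`, then `G ⪰ μ` and `α L ≤ μ - 2σ`.
  nlinarith [mul_le_mul_of_nonneg_left hdec.le hα.1, mul_le_mul_of_nonneg_left (hGμ (y - x)) hα.1,
    mul_le_mul_of_nonneg_right hαL (mul_nonneg hα.1 (sq_nonneg ‖y - x‖))]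

theorem min_le_pow_of_not_armijo [CompleteSpace E] {f g : E → ℝ} {fgrad : E → E}
    {G : E →L[ℝ] E} {s Γ : Set E} {L : ℝ≥0} {μ σ β : ℝ} {x y : E} {m : ℕ} (hg : ConvexOn ℝ s g)
    (hΓ : Convex ℝ Γ) (hf : ∀ z ∈ Γ, HasGradientAt f (fgrad z) z) (hL : LipschitzOnWith L fgrad Γ)
    (hLpos : 0 < L) (hGμ : ∀ u, μ * ‖u‖ ^ 2 ≤ ⟪u, G u⟫) (hxs : x ∈ s) (hys : y ∈ s)
    (hxΓ : x ∈ Γ) (hyΓ : y ∈ Γ) (hdec : Theta f g fgrad G x y < Theta f g fgrad G x x)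
    (hβ : β ∈ Icc (0 : ℝ) 1)
    (hm : ∀ j < m, ¬ FE f g s (x + β ^ j • (y - x)) ≤
      ((f x + g x - σ * β ^ j * ‖y - x‖ ^ 2 : ℝ) : EReal)) :
    min 1 (β * (μ - 2 * σ) / L) ≤ β ^ m := by
  refine min_le_pow_of_forall_lt_not hβ.1 hLpos (fun j hj => ?_) hm
  have hα : β ^ j ∈ Icc (0 : ℝ) 1 := ⟨pow_nonneg hβ.1 j, pow_le_one₀ hβ.1 hβ.2⟩
  rw [FE_eq_coe_of_mem (hg.1.add_smul_sub_mem hxs hys hα), EReal.coe_le_coe_iff]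
  exact armijo_of_mul_le_of_theta_lt hg hΓ hf hL hGμ hxs hys hxΓ hyΓ hdec hα hj

end InnerProductSpace

theorem vmipg_subsequential_general
    (f g : X → ℝ) (domg O : Set X) (fgrad : X → X)
    (hgconv : ConvexOn ℝ domg g) (hgcont : ContinuousOn g domg)
    (hglsc : LowerSemicontinuous (extE g domg))
    (hfgrad : ∀ z ∈ O, HasGradientAt f (fgrad z) z)
    (hFlb : ∃ c : ℝ, ∀ z ∈ domg, c ≤ f z + g z)
    (μ σ β : ℝ) (hμ : 0 < μ) (hβ : 0 < β ∧ β < 1) (hσ : 0 < σ ∧ σ < (1/2) * min 1 μ)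
    (eps : ℕ → ℝ) (hepsbd : ∃ C : ℝ, ∀ k, eps k ≤ C)
    (x y xbar : ℕ → X) (G : ℕ → X →L[ℝ] X) (m : ℕ → ℕ)
    (hx0 : x 0 ∈ domg)
    (hGsa : ∀ k, ∀ u v : X, ⟪G k u, v⟫ = ⟪u, G k v⟫)
    (hGlb : ∀ k, ∀ u : X, μ * ‖u‖ ^ 2 ≤ ⟪u, G k u⟫)
    (hxbar : ∀ k, xbar k ∈ domg ∧ ∀ z ∈ domg,
      Theta f g fgrad (G k) (x k) (xbar k) ≤ Theta f g fgrad (G k) (x k) z)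
    (hy : ∀ k, y k ∈ domg ∧
      Theta f g fgrad (G k) (x k) (y k) < Theta f g fgrad (G k) (x k) (x k) ∧
      Theta f g fgrad (G k) (x k) (y k) - Theta f g fgrad (G k) (x k) (xbar k)
        ≤ eps k * ‖y k - x k‖ ^ 2)
    (hls : ∀ k,
      (FE f g domg (x k + β ^ (m k) • (y k - x k))
        ≤ ((f (x k) + g (x k) - σ * β ^ (m k) * ‖y k - x k‖ ^ 2 : ℝ) : EReal)) ∧
      ∀ j < m k, ¬ (FE f g domg (x k + β ^ j • (y k - x k))
        ≤ ((f (x k) + g (x k) - σ * β ^ j * ‖y k - x k‖ ^ 2 : ℝ) : EReal)))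
    (hupd : ∀ k,
      (FE f g domg (y k) < FE f g domg (x k + β ^ (m k) • (y k - x k)) ∧ x (k+1) = y k) ∨
      ((¬ FE f g domg (y k) < FE f g domg (x k + β ^ (m k) • (y k - x k))) ∧
        x (k+1) = x k + β ^ (m k) • (y k - x k)))
    (μbar : ℝ) (hGub : ∀ k, ‖G k‖ ≤ μbar)
    (Γ : Set X) (hΓc : IsCompact Γ) (hΓconv : Convex ℝ Γ) (hΓO : Γ ⊆ O)
    (hΓx : ∀ k, x k ∈ Γ) (hΓy : ∀ k, y k ∈ Γ)
    (Lf : ℝ) (hLf : 0 < Lf) (hLip : LipschitzOnWith (Real.toNNReal Lf) fgrad Γ)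
    (prox1 : X → X)
    (hprox1 : ∀ u : X, IsProxPt 1 (ContinuousLinearMap.id ℝ X) g domg u (prox1 u)) :
    Tendsto (fun k => ‖y k - x k‖) atTop (nhds 0) ∧
    Tendsto (fun k => ‖x k - prox1 (x k - fgrad (x k))‖) atTop (nhds 0) ∧
    {p : X | MapClusterPt p atTop x}.Nonempty ∧
    IsCompact {p : X | MapClusterPt p atTop x} ∧
    ∃ Fbar : ℝ, Tendsto (fun k => f (x k) + g (x k)) atTop (nhds Fbar) ∧
      ∀ p : X, MapClusterPt p atTop x →
        IsStationaryPtFG fgrad g domg p ∧ f p + g p = Fbar := by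
  obtain ⟨C, hC⟩ := hepsbd
  obtain ⟨c, hc⟩ := hFlb
  have hL : 0 < Lf.toNNReal := Real.toNNReal_pos.2 hLf
  have hμσ : 0 < μ - 2 * σ := by linarith [min_le_right 1 μ]
  have hnext : ∀ k, x (k + 1) ∈ domg ∧
      f (x (k + 1)) + g (x (k + 1)) ≤ f (x k) + g (x k) - σ * β ^ (m k) * ‖y k - x k‖ ^ 2 :=
    fun k => mem_and_add_le_of_FE_le (hls k).1 (hupd k)
  have hxdom : ∀ k, x k ∈ domg := by
    rintro (_ | k)
    exacts [hx0, (hnext k).1]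
  obtain ⟨Fbar, hFbar, hdecr⟩ := exists_tendsto_of_succ_add_le
    (u := fun k => f (x k) + g (x k)) (e := fun k => σ * β ^ (m k) * ‖y k - x k‖ ^ 2)
    (fun k => mul_nonneg (mul_nonneg hσ.1.le (pow_nonneg hβ.1.le _)) (sq_nonneg _))
    (fun k => by linarith [(hnext k).2]) ⟨c, by rintro _ ⟨k, rfl⟩; exact hc _ (hxdom k)⟩
  have hstep : ∀ k, min 1 (β * (μ - 2 * σ) / Lf.toNNReal) ≤ β ^ (m k) := fun k =>
    min_le_pow_of_not_armijo hgconv hΓconv (fun z hz => hfgrad z (hΓO hz)) hLip hL (hGlb k)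
      (hxdom k) (hy k).1 (hΓx k) (hΓy k) (hy k).2.1 ⟨hβ.1.le, hβ.2.le⟩ (hls k).2
  have hd : Tendsto (fun k => ‖y k - x k‖) atTop (𝓝 0) :=
    tendsto_norm_zero_of_mul_sq
      (mul_pos hσ.1 (lt_min one_pos (div_pos (mul_pos hβ.1 hμσ) (NNReal.coe_pos.2 hL))))
      (fun k => mul_le_mul_of_nonneg_left (hstep k) hσ.1.le) hdecr
  have hsub : ∀ k, -(fgrad (x k) + G k (xbar k - x k)) ∈ SubdiffAt g domg (xbar k) := fun k =>
    neg_add_mem_subdiffAt_of_isMinOn_theta hgconv (hGsa k) (hxbar k).1 (hxbar k).2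
  have hbar : Tendsto (fun k => ‖xbar k - x k‖) atTop (𝓝 0) :=
    tendsto_norm_sub_of_mul_sq_le (half_pos hμ) (fun k =>
      (half_mul_sq_le_theta_sub hgconv (hGsa k) (hGlb k) (hxbar k).1 (hxbar k).2 (hy k).1).trans
        ((hy k).2.2.trans (mul_le_mul_of_nonneg_right (hC k) (sq_nonneg _)))) hd
  refine ⟨hd, ?_, ?_, hΓc.isCompact_setOf_mapClusterPt (Eventually.of_forall hΓx), Fbar, hFbar,
    fun p hp => ?_⟩
  · refine squeeze_zero (fun _ => norm_nonneg _) (fun k => ?_)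
      (by simpa using hbar.const_mul (2 + μbar))
    exact (norm_sub_le_of_mem_subdiffAt (sub_mem_subdiffAt_of_isProxPt hgconv (hprox1 _))
      (hsub k)).trans (by gcongr; exact hGub k)
  · obtain ⟨p, -, hp⟩ := hΓc.exists_mapClusterPt (f := atTop) (u := x)
      (tendsto_principal.2 (Eventually.of_forall hΓx))
    exact ⟨p, hp⟩
  · exact isStationaryPtFG_and_eq_of_mapClusterPt hΓc.isClosed hΓx hxdom
      (HasGradientAt.continuousOn fun z hz => hfgrad z (hΓO hz)) hLip.continuousOn hgcont hglsc
      hFbar (tendsto_zero_iff_norm_tendsto_zero.2 hbar) hGub hsub hp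

/-- `‖d^k‖ → 0`, `r(x^k) → 0`, the accumulation set is nonempty and compact,
consists of stationary points, and `F` is constant on it. -/
theorem vmipg_subsequential
    (f g : X → ℝ) (domg O : Set X) (fgrad : X → X)
    (hdom : domg.Nonempty) (hO : IsOpen O) (hclO : closure domg ⊆ O)
    (hgconv : ConvexOn ℝ domg g) (hgcont : ContinuousOn g domg)
    (hglsc : LowerSemicontinuous (extE g domg))
    (hflsc : LowerSemicontinuous f)
    (hfC2 : ContDiffOn ℝ 2 f O)
    (hfgrad : ∀ z ∈ O, HasGradientAt f (fgrad z) z)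
    (hFlb : ∃ c : ℝ, ∀ z ∈ domg, c ≤ f z + g z)
    (μ σ β : ℝ) (hμ : 0 < μ) (hβ : 0 < β ∧ β < 1) (hσ : 0 < σ ∧ σ < (1/2) * min 1 μ)
    (eps : ℕ → ℝ) (heps : ∀ k, 0 < eps k) (hepsbd : ∃ C : ℝ, ∀ k, eps k ≤ C)
    (kbar : ℕ) (hkbar : ∀ k, kbar ≤ k → eps k ≤ μ / 10)
    (x y xbar : ℕ → X) (G : ℕ → X →L[ℝ] X) (m : ℕ → ℕ)
    (hx0 : x 0 ∈ domg)
    (hGsa : ∀ k, ∀ u v : X, ⟪G k u, v⟫ = ⟪u, G k v⟫)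
    (hGlb : ∀ k, ∀ u : X, μ * ‖u‖ ^ 2 ≤ ⟪u, G k u⟫)
    (hxbar : ∀ k, xbar k ∈ domg ∧ ∀ z ∈ domg,
      Theta f g fgrad (G k) (x k) (xbar k) ≤ Theta f g fgrad (G k) (x k) z)
    (hy : ∀ k, y k ∈ domg ∧
      Theta f g fgrad (G k) (x k) (y k) < Theta f g fgrad (G k) (x k) (x k) ∧
      Theta f g fgrad (G k) (x k) (y k) - Theta f g fgrad (G k) (x k) (xbar k)
        ≤ eps k * ‖y k - x k‖ ^ 2)
    (hls : ∀ k,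
      (FE f g domg (x k + β ^ (m k) • (y k - x k))
        ≤ ((f (x k) + g (x k) - σ * β ^ (m k) * ‖y k - x k‖ ^ 2 : ℝ) : EReal)) ∧
      ∀ j < m k, ¬ (FE f g domg (x k + β ^ j • (y k - x k))
        ≤ ((f (x k) + g (x k) - σ * β ^ j * ‖y k - x k‖ ^ 2 : ℝ) : EReal)))
    (hupd : ∀ k,
      (FE f g domg (y k) < FE f g domg (x k + β ^ (m k) • (y k - x k)) ∧ x (k+1) = y k) ∨
      ((¬ FE f g domg (y k) < FE f g domg (x k + β ^ (m k) • (y k - x k))) ∧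
        x (k+1) = x k + β ^ (m k) • (y k - x k)))
    (hxbdd : ∃ R : ℝ, ∀ k, ‖x k‖ ≤ R)
    (μbar : ℝ) (hμbar : 0 < μbar) (hGub : ∀ k, ‖G k‖ ≤ μbar)
    (Γ : Set X) (hΓc : IsCompact Γ) (hΓconv : Convex ℝ Γ) (hΓO : Γ ⊆ O)
    (hΓx : ∀ k, x k ∈ Γ) (hΓy : ∀ k, y k ∈ Γ)
    (Lf : ℝ) (hLf : 0 < Lf) (hLip : LipschitzOnWith (Real.toNNReal Lf) fgrad Γ)
    (prox1 : X → X)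
    (hprox1 : ∀ u : X, IsProxPt 1 (ContinuousLinearMap.id ℝ X) g domg u (prox1 u)) :
    Tendsto (fun k => ‖y k - x k‖) atTop (nhds 0) ∧
    Tendsto (fun k => ‖x k - prox1 (x k - fgrad (x k))‖) atTop (nhds 0) ∧
    {p : X | MapClusterPt p atTop x}.Nonempty ∧
    IsCompact {p : X | MapClusterPt p atTop x} ∧
    ∃ Fbar : ℝ, Tendsto (fun k => f (x k) + g (x k)) atTop (nhds Fbar) ∧
      ∀ p : X, MapClusterPt p atTop x →
        IsStationaryPtFG fgrad g domg p ∧ f p + g p = Fbar :=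
  vmipg_subsequential_general f g domg O fgrad hgconv hgcont hglsc hfgrad hFlb μ σ β hμ hβ hσ eps
    hepsbd x y xbar G m hx0 hGsa hGlb hxbar hy hls hupd μbar hGub Γ hΓc hΓconv hΓO hΓx hΓy Lf hLf
    hLip prox1 hprox1
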